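/- For all integers n ≥ 2 and m ≥ 1 and every real number t with n - 2 < t < n, it holds that H_{n,m}(t) ≥ 1/(1 + (n-t)/2) + ((n-t)/2)/(1 + (n-t)/2) · H_{n,m-1}(t-2). -/
import Mathlib

open MeasureTheory Filter

/-- `Ib n m = Σ_{z=0}^{n} ((1 + (-1)^{n-z}) / 2^m) · m!/(z!(m-z)!)`, empty sum for `n < 0`. -/
noncomputable def Ib (n : ℤ) (m : ℕ) : ℝ :=
  ∑ z ∈ Finset.range (n + 1).toNat,
    ((1 + (-1 : ℝ) ^ (n.toNat - z)) / 2 ^ m) * (m.choose z)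

/-- The function `G(x, y, m)` of the paper. -/
noncomputable def Gfun (x y m : ℕ) : ℝ :=
  if x = 0 ∧ y = 0 then 1 else
    ∑ n ∈ Finset.range (m / (2 * (x + y)) + 1),
      (2 * Ib (((m : ℤ) - x) / 2 - ((x : ℤ) + y) * n) (2 * (((m : ℤ) - x) / 2) + x + 2).toNat
       - 2 * Ib (((m : ℤ) - x) / 2 - y - ((x : ℤ) + y) * n) (2 * (((m : ℤ) - x) / 2) + x + 2).toNat
       + 2 * Ib (((m : ℤ) - y) / 2 - ((x : ℤ) + y) * n) (2 * (((m : ℤ) - y) / 2) + y + 2).toNat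
       - 2 * Ib (((m : ℤ) - y) / 2 - x - ((x : ℤ) + y) * n) (2 * (((m : ℤ) - y) / 2) + y + 2).toNat)

/-- The piecewise-linear interpolation `H_{n,m}(t)` of the paper. -/
noncomputable def Hfun (n m : ℕ) (t : ℝ) : ℝ :=
  if (n : ℝ) ≤ |t| then 1 else
    (1 - ((n : ℝ) + t) / 2 + (⌊((n : ℝ) + t) / 2⌋ : ℤ))
        * Gfun (⌊((n : ℝ) + t) / 2⌋).toNat (n - (⌊((n : ℝ) + t) / 2⌋).toNat) m
    + (((n : ℝ) + t) / 2 - (⌊((n : ℝ) + t) / 2⌋ : ℤ))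
        * Gfun ((⌊((n : ℝ) + t) / 2⌋).toNat + 1) (n - (⌊((n : ℝ) + t) / 2⌋).toNat - 1) m

lemma Ib_neg {n : ℤ} (hn : n < 0) (m : ℕ) : Ib n m = 0 := by
  unfold Ib
  rw [show (n+1).toNat = 0 by omega]
  simp

lemma key_succ (N m : ℕ) :
    ∑ z ∈ Finset.range (N+1), ((1 + (-1:ℝ)^(N - z))/2^(m+1)) * ((m+1).choose z)
    = (∑ z ∈ Finset.range (N+1), ((1 + (-1:ℝ)^(N - z))/2^m) * (m.choose z)
       + ∑ z ∈ Finset.range N, ((1 + (-1:ℝ)^(N - 1 - z))/2^m) * (m.choose z)) / 2 := by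
  rw [Finset.sum_range_succ' (fun z => ((1 + (-1:ℝ)^(N - z))/2^(m+1)) * (((m+1).choose z : ℕ) : ℝ)) N]
  rw [Finset.sum_range_succ' (fun z => ((1 + (-1:ℝ)^(N - z))/2^m) * ((m.choose z : ℕ) : ℝ)) N]
  simp only [Nat.choose_succ_succ, Nat.cast_add, mul_add]
  rw [Finset.sum_add_distrib, add_div, add_div]
  have h1 : ∀ z ∈ Finset.range N,
      ((1 + (-1:ℝ)^(N - (z+1)))/2^(m+1)) * (m.choose z) =
      (((1 + (-1:ℝ)^(N - 1 - z))/2^m) * (m.choose z)) / 2 := by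
    intro z hz
    rw [show N - (z+1) = N - 1 - z by omega]
    ring
  have h2 : ∀ z ∈ Finset.range N,
      ((1 + (-1:ℝ)^(N - (z+1)))/2^(m+1)) * (m.choose (z+1)) =
      (((1 + (-1:ℝ)^(N - (z+1)))/2^m) * (m.choose (z+1))) / 2 := by
    intro z hz; ring
  rw [Finset.sum_congr rfl h1, Finset.sum_congr rfl h2, ← Finset.sum_div, ← Finset.sum_div]
  simp only [Nat.choose_zero_right, Nat.cast_one, Nat.sub_zero]
  ring

lemma Ib_succ (n : ℤ) (m : ℕ) : Ib n (m+1) = (Ib n m + Ib (n-1) m) / 2 := by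
  rcases lt_or_ge n 0 with h | h
  · rw [Ib_neg h, Ib_neg h, Ib_neg (by omega), add_zero, zero_div]
  · unfold Ib
    have h1 : (n+1).toNat = n.toNat + 1 := by omega
    rcases eq_or_lt_of_le h with h0 | h0
    · rw [← h0]; norm_num [key_succ 0 m]; rw [pow_succ]; ring
    · have h2 : (n-1+1).toNat = n.toNat := by omega
      have h3 : (n-1).toNat = n.toNat - 1 := by omega
      rw [h1, h2, h3]
      exact key_succ n.toNat m

lemma Ib_pair (n : ℤ) (hn : 0 ≤ n) (m : ℕ) :
    Ib n m + Ib (n-1) m = (∑ z ∈ Finset.range (n.toNat + 1), (m.choose z : ℝ)) * 2 / 2^m := by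
  unfold Ib
  have h1 : (n+1).toNat = n.toNat + 1 := by omega
  rw [h1]
  set N := n.toNat with hN
  rcases Nat.eq_zero_or_pos N with h0 | h0
  · have : n = 0 := by omega
    subst this
    simp [h0]
    ring
  · have h2 : (n-1+1).toNat = N := by omega
    have h3 : (n-1).toNat = N - 1 := by omega
    rw [h2, h3]
    rw [Finset.sum_range_succ, Finset.sum_range_succ (fun z => ((m.choose z : ℕ) : ℝ))]
    rw [add_right_comm, ← Finset.sum_add_distrib]
    have h4 : ∀ z ∈ Finset.range N,
        ((1 + (-1:ℝ)^(N - z))/2^m) * (m.choose z) + ((1 + (-1:ℝ)^(N - 1 - z))/2^m) * (m.choose z)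
        = (m.choose z : ℝ) * 2 / 2^m := by
      intro z hz
      simp only [Finset.mem_range] at hz
      have : N - z = (N - 1 - z) + 1 := by omega
      rw [this, pow_succ]
      ring
    have hs : ∑ x ∈ Finset.range N, ((m.choose x:ℝ) * 2 / 2 ^ m)
        = (∑ x ∈ Finset.range N, (m.choose x:ℝ)) * 2 / 2^m := by
      rw [← Finset.sum_div, ← Finset.sum_mul]
    rw [Finset.sum_congr rfl h4, Nat.sub_self, pow_zero, hs]
    ring

lemma Ib_half (b : ℕ) : 2 * Ib (b : ℤ) (2*b+2) = 1 := by
  rw [show 2*b+2 = (2*b+1)+1 by ring, Ib_succ]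
  rw [Ib_pair _ (by positivity)]
  rw [Int.toNat_natCast]
  rw [← Nat.cast_sum, Nat.sum_range_choose_halfway b]
  have h : (2:ℝ)^(2*b+1) = 2 * 4^b := by
    rw [pow_succ, pow_mul]; norm_num; ring
  rw [h]
  have h4 : (4:ℝ)^b ≠ 0 := by positivity
  push_cast
  field_simp

lemma Gfun_symm (x y m : ℕ) : Gfun x y m = Gfun y x m := by
  unfold Gfun
  by_cases h : x = 0 ∧ y = 0
  · rw [if_pos h, if_pos ⟨h.2, h.1⟩]
  · rw [if_neg h, if_neg (fun hc => h ⟨hc.2, hc.1⟩)]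
    rw [Nat.add_comm y x]
    refine Finset.sum_congr rfl fun k _ => ?_
    rw [add_comm (y:ℤ) x]
    ring

lemma Gfun_x_zero (x m : ℕ) : Gfun x 0 m = 1 := by
  rcases Nat.eq_zero_or_pos x with h | hx
  · subst h; rw [Gfun, if_pos ⟨rfl, rfl⟩]
  · rw [Gfun, if_neg (by omega)]
    simp only [Nat.cast_zero, add_zero, sub_zero]
    have e1 : ∀ k ∈ Finset.range (m / (2 * x) + 1),
        (2 * Ib (((m : ℤ) - x) / 2 - (x : ℤ) * k) (2 * (((m : ℤ) - x) / 2) + x + 2).toNat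
         - 2 * Ib (((m : ℤ) - x) / 2 - (x : ℤ) * k) (2 * (((m : ℤ) - x) / 2) + x + 2).toNat
         + 2 * Ib ((m : ℤ) / 2 - (x : ℤ) * k) (2 * ((m : ℤ) / 2) + 2).toNat
         - 2 * Ib ((m : ℤ) / 2 - x - (x : ℤ) * k) (2 * ((m : ℤ) / 2) + 2).toNat)
        = (fun j : ℕ => 2 * Ib ((m : ℤ) / 2 - (x : ℤ) * j) (2 * ((m : ℤ) / 2) + 2).toNat) k
          - (fun j : ℕ => 2 * Ib ((m : ℤ) / 2 - (x : ℤ) * j) (2 * ((m : ℤ) / 2) + 2).toNat) (k+1) := by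
      intro k _
      simp only
      have a3 : (m : ℤ) / 2 - x - (x : ℤ) * k = (m : ℤ) / 2 - (x : ℤ) * (k+1 : ℕ) := by
        push_cast; ring
      rw [a3]
      ring
    rw [Finset.sum_congr rfl e1, Finset.sum_range_sub']
    have hz : Ib ((m:ℤ)/2 - (x:ℤ) * ((m / (2 * x) + 1 : ℕ))) (2 * ((m : ℤ) / 2) + 2).toNat = 0 := by
      apply Ib_neg
      have h1 : m < (m / (2*x) + 1) * (2*x) :=
        (Nat.div_lt_iff_lt_mul (by omega)).mp (Nat.lt_succ_self _)
      have h1' : m < 2*(x*(m / (2*x) + 1)) := by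
        rw [show 2*(x*(m / (2*x) + 1)) = (m / (2*x) + 1) * (2*x) from by ring]; exact h1
      have h2 : ((m:ℤ)) < 2*((x:ℤ)*((m / (2*x) + 1 : ℕ) : ℤ)) := by exact_mod_cast h1'
      omega
    rw [hz, mul_zero, sub_zero]
    set b := m / 2 with hb
    have hcast : ((m:ℤ))/2 = (b:ℤ) := by omega
    rw [Nat.cast_zero, mul_zero, sub_zero, hcast]
    have ht' : (2 * (b:ℤ) + 2).toNat = 2*b+2 := by omega
    rw [ht']
    exact Ib_half b

lemma Gfun_rec (x y m : ℕ) :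
    Gfun (x+1) (y+1) (m+1) = (Gfun x (y+2) m + Gfun (x+2) y m) / 2 := by
  obtain ⟨q, hq⟩ : ∃ q, x + y + 2 = q := ⟨_, rfl⟩
  have hq1 : 1 ≤ q := by omega
  rw [Gfun, Gfun, Gfun, if_neg (by omega), if_neg (by omega), if_neg (by omega)]
  rw [show x+1+(y+1) = q from by omega, show x+(y+2) = q from by omega,
      show x+2+y = q from by omega]
  have c1 : ((x+1:ℕ):ℤ) + ((y+1:ℕ):ℤ) = (q:ℤ) := by push_cast; omega
  have c2 : ((x:ℕ):ℤ) + ((y+2:ℕ):ℤ) = (q:ℤ) := by push_cast; omega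
  have c3 : ((x+2:ℕ):ℤ) + ((y:ℕ):ℤ) = (q:ℤ) := by push_cast; omega
  simp only [c1, c2, c3]
  have ra : ((m+1:ℕ):ℤ) - ((x+1:ℕ):ℤ) = (m:ℤ) - (x:ℤ) := by push_cast; ring
  have rb : ((m+1:ℕ):ℤ) - ((y+1:ℕ):ℤ) = (m:ℤ) - (y:ℤ) := by push_cast; ring
  have ra2 : ((m:ℤ) - ((x+2:ℕ):ℤ))/2 = ((m:ℤ) - (x:ℤ))/2 - 1 := by push_cast; omega
  have rb2 : ((m:ℤ) - ((y+2:ℕ):ℤ))/2 = ((m:ℤ) - (y:ℤ))/2 - 1 := by push_cast; omega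
  have tx : (2 * (((m:ℤ) - (x:ℤ))/2) + ((x+1:ℕ):ℤ) + 2).toNat
      = (2 * (((m:ℤ) - (x:ℤ))/2) + (x:ℤ) + 2).toNat + 1 := by push_cast; omega
  have ty : (2 * (((m:ℤ) - (y:ℤ))/2) + ((y+1:ℕ):ℤ) + 2).toNat
      = (2 * (((m:ℤ) - (y:ℤ))/2) + (y:ℤ) + 2).toNat + 1 := by push_cast; omega
  have t2x : (2 * (((m:ℤ) - (x:ℤ))/2 - 1) + ((x+2:ℕ):ℤ) + 2).toNat
      = (2 * (((m:ℤ) - (x:ℤ))/2) + (x:ℤ) + 2).toNat := by push_cast; omega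
  have t2y : (2 * (((m:ℤ) - (y:ℤ))/2 - 1) + ((y+2:ℕ):ℤ) + 2).toNat
      = (2 * (((m:ℤ) - (y:ℤ))/2) + (y:ℤ) + 2).toNat := by push_cast; omega
  rcases eq_or_lt_of_le (Nat.div_le_div_right (c := 2*q) (Nat.le_add_right m 1)) with hK | hK
  · rw [← hK, ← Finset.sum_add_distrib, Finset.sum_div]
    refine Finset.sum_congr rfl fun k _ => ?_
    rw [ra, rb, ra2, rb2, tx, ty, t2x, t2y]
    rw [Ib_succ (((m:ℤ) - (x:ℤ))/2 - (q:ℤ) * (k:ℤ)),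
        Ib_succ (((m:ℤ) - (x:ℤ))/2 - ((y+1:ℕ):ℤ) - (q:ℤ) * (k:ℤ)),
        Ib_succ (((m:ℤ) - (y:ℤ))/2 - (q:ℤ) * (k:ℤ)),
        Ib_succ (((m:ℤ) - (y:ℤ))/2 - ((x+1:ℕ):ℤ) - (q:ℤ) * (k:ℤ))]
    rw [show ((m:ℤ) - (x:ℤ))/2 - (q:ℤ) * (k:ℤ) - 1 = ((m:ℤ) - (x:ℤ))/2 - 1 - (q:ℤ) * (k:ℤ) from by ring,
        show ((m:ℤ) - (x:ℤ))/2 - ((y+1:ℕ):ℤ) - (q:ℤ) * (k:ℤ) = ((m:ℤ) - (x:ℤ))/2 - 1 - (y:ℤ) - (q:ℤ) * (k:ℤ) from by push_cast; ring,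
        show ((m:ℤ) - (x:ℤ))/2 - 1 - (y:ℤ) - (q:ℤ) * (k:ℤ) - 1 = ((m:ℤ) - (x:ℤ))/2 - ((y+2:ℕ):ℤ) - (q:ℤ) * (k:ℤ) from by push_cast; ring,
        show ((m:ℤ) - (y:ℤ))/2 - (q:ℤ) * (k:ℤ) - 1 = ((m:ℤ) - (y:ℤ))/2 - 1 - (q:ℤ) * (k:ℤ) from by ring,
        show ((m:ℤ) - (y:ℤ))/2 - ((x+1:ℕ):ℤ) - (q:ℤ) * (k:ℤ) = ((m:ℤ) - (y:ℤ))/2 - 1 - (x:ℤ) - (q:ℤ) * (k:ℤ) from by push_cast; ring,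
        show ((m:ℤ) - (y:ℤ))/2 - 1 - (x:ℤ) - (q:ℤ) * (k:ℤ) - 1 = ((m:ℤ) - (y:ℤ))/2 - ((x+2:ℕ):ℤ) - (q:ℤ) * (k:ℤ) from by push_cast; ring]
    ring
  · have h1 : (m+1) / (2*q) ≤ m / (2*q) + 1 := by
      have h2 : (m + 2*q) / (2*q) = m / (2*q) + 1 := Nat.add_div_right m (by omega)
      have h3 : (m+1) / (2*q) ≤ (m + 2*q) / (2*q) := Nat.div_le_div_right (by omega)
      omega
    have h4 : (m+1) / (2*q) = m / (2*q) + 1 := by omega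
    have h5 : m < ((m+1)/(2*q)) * (2*q) := (Nat.div_lt_iff_lt_mul (by omega)).mp hK
    have h6 : ((m+1)/(2*q)) * (2*q) ≤ m+1 := Nat.div_mul_le_self _ _
    have h7 : m+1 = 2*(q*(m/(2*q)+1)) := by
      rw [show 2*(q*(m/(2*q)+1)) = (m/(2*q)+1) * (2*q) from by ring, ← h4]; omega
    rw [show (m+1)/(2*q) + 1 = (m/(2*q)+1)+1 from by omega, Finset.sum_range_succ]
    have hprod : (q:ℤ) * ((m/(2*q)+1 : ℕ):ℤ) = ((q*(m/(2*q)+1) : ℕ):ℤ) := by push_cast; ring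
    rw [ra, rb, hprod]
    generalize hw : q*(m/(2*q)+1) = w
    rw [hw] at h7
    rw [Ib_neg (n := ((m:ℤ) - (x:ℤ))/2 - ((w:ℕ):ℤ)) (by omega),
        Ib_neg (n := ((m:ℤ) - (x:ℤ))/2 - ((y+1:ℕ):ℤ) - ((w:ℕ):ℤ)) (by push_cast; omega),
        Ib_neg (n := ((m:ℤ) - (y:ℤ))/2 - ((w:ℕ):ℤ)) (by omega),
        Ib_neg (n := ((m:ℤ) - (y:ℤ))/2 - ((x+1:ℕ):ℤ) - ((w:ℕ):ℤ)) (by push_cast; omega)]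
    rw [show (2*(0:ℝ) - 2*0 + 2*0 - 2*0) = 0 from by ring, add_zero,
        ← Finset.sum_add_distrib, Finset.sum_div]
    refine Finset.sum_congr rfl fun k _ => ?_
    rw [ra2, rb2, tx, ty, t2x, t2y]
    rw [Ib_succ (((m:ℤ) - (x:ℤ))/2 - (q:ℤ) * (k:ℤ)),
        Ib_succ (((m:ℤ) - (x:ℤ))/2 - ((y+1:ℕ):ℤ) - (q:ℤ) * (k:ℤ)),
        Ib_succ (((m:ℤ) - (y:ℤ))/2 - (q:ℤ) * (k:ℤ)),
        Ib_succ (((m:ℤ) - (y:ℤ))/2 - ((x+1:ℕ):ℤ) - (q:ℤ) * (k:ℤ))]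
    rw [show ((m:ℤ) - (x:ℤ))/2 - (q:ℤ) * (k:ℤ) - 1 = ((m:ℤ) - (x:ℤ))/2 - 1 - (q:ℤ) * (k:ℤ) from by ring,
        show ((m:ℤ) - (x:ℤ))/2 - ((y+1:ℕ):ℤ) - (q:ℤ) * (k:ℤ) = ((m:ℤ) - (x:ℤ))/2 - 1 - (y:ℤ) - (q:ℤ) * (k:ℤ) from by push_cast; ring,
        show ((m:ℤ) - (x:ℤ))/2 - 1 - (y:ℤ) - (q:ℤ) * (k:ℤ) - 1 = ((m:ℤ) - (x:ℤ))/2 - ((y+2:ℕ):ℤ) - (q:ℤ) * (k:ℤ) from by push_cast; ring,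
        show ((m:ℤ) - (y:ℤ))/2 - (q:ℤ) * (k:ℤ) - 1 = ((m:ℤ) - (y:ℤ))/2 - 1 - (q:ℤ) * (k:ℤ) from by ring,
        show ((m:ℤ) - (y:ℤ))/2 - ((x+1:ℕ):ℤ) - (q:ℤ) * (k:ℤ) = ((m:ℤ) - (y:ℤ))/2 - 1 - (x:ℤ) - (q:ℤ) * (k:ℤ) from by push_cast; ring,
        show ((m:ℤ) - (y:ℤ))/2 - 1 - (x:ℤ) - (q:ℤ) * (k:ℤ) - 1 = ((m:ℤ) - (y:ℤ))/2 - ((x+2:ℕ):ℤ) - (q:ℤ) * (k:ℤ) from by push_cast; ring]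
    ring

lemma Gfun_zero (x y : ℕ) : Gfun (x+1) (y+1) 0 = 0 := by
  rw [Gfun, if_neg (by omega)]
  rw [Nat.zero_div, Finset.sum_range_one]
  rw [Ib_neg (n := (((0:ℕ):ℤ) - ((x+1:ℕ):ℤ))/2 - (((x+1:ℕ):ℤ) + ((y+1:ℕ):ℤ)) * ((0:ℕ):ℤ))
        (by push_cast; omega),
      Ib_neg (n := (((0:ℕ):ℤ) - ((x+1:ℕ):ℤ))/2 - ((y+1:ℕ):ℤ) - (((x+1:ℕ):ℤ) + ((y+1:ℕ):ℤ)) * ((0:ℕ):ℤ))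
        (by push_cast; omega),
      Ib_neg (n := (((0:ℕ):ℤ) - ((y+1:ℕ):ℤ))/2 - (((x+1:ℕ):ℤ) + ((y+1:ℕ):ℤ)) * ((0:ℕ):ℤ))
        (by push_cast; omega),
      Ib_neg (n := (((0:ℕ):ℤ) - ((y+1:ℕ):ℤ))/2 - ((x+1:ℕ):ℤ) - (((x+1:ℕ):ℤ) + ((y+1:ℕ):ℤ)) * ((0:ℕ):ℤ))
        (by push_cast; omega)]
  ring

lemma Gfun_nonneg (m x y : ℕ) : 0 ≤ Gfun x y m := by
  induction m generalizing x y with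
  | zero =>
    match x, y with
    | 0, 0 => rw [Gfun, if_pos ⟨rfl, rfl⟩]; norm_num
    | 0, y+1 => rw [Gfun_symm, Gfun_x_zero]; norm_num
    | x+1, 0 => rw [Gfun_x_zero]; norm_num
    | x+1, y+1 => rw [Gfun_zero]
  | succ m ih =>
    match x, y with
    | 0, 0 => rw [Gfun, if_pos ⟨rfl, rfl⟩]; norm_num
    | 0, y+1 => rw [Gfun_symm, Gfun_x_zero]; norm_num
    | x+1, 0 => rw [Gfun_x_zero]; norm_num
    | x+1, y+1 =>
      rw [Gfun_rec]
      have h1 := ih x (y+2)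
      have h2 := ih (x+2) y
      linarith

lemma Gfun_mono (m x y : ℕ) : Gfun x y m ≤ Gfun x y (m+1) := by
  induction m generalizing x y with
  | zero =>
    match x, y with
    | 0, 0 => rw [Gfun, if_pos ⟨rfl, rfl⟩]; rw [Gfun, if_pos ⟨rfl, rfl⟩]
    | 0, y+1 => rw [Gfun_symm, Gfun_x_zero, Gfun_symm, Gfun_x_zero]
    | x+1, 0 => rw [Gfun_x_zero, Gfun_x_zero]
    | x+1, y+1 => rw [Gfun_zero]; exact Gfun_nonneg 1 (x+1) (y+1)
  | succ m ih =>
    match x, y with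
    | 0, 0 => rw [Gfun, if_pos ⟨rfl, rfl⟩]; rw [Gfun, if_pos ⟨rfl, rfl⟩]
    | 0, y+1 => rw [Gfun_symm, Gfun_x_zero, Gfun_symm, Gfun_x_zero]
    | x+1, 0 => rw [Gfun_x_zero, Gfun_x_zero]
    | x+1, y+1 =>
      rw [Gfun_rec, Gfun_rec]
      have h1 := ih x (y+2)
      have h2 := ih (x+2) y
      linarith


lemma Hfun_eval_top (n m : ℕ) (hn : 2 ≤ n) (t : ℝ) (ht1 : (n : ℝ) - 2 < t) (ht2 : t < (n : ℝ)) :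
    Hfun n m t = (((n:ℝ) - t)/2) * Gfun (n-1) 1 m + (1 - ((n:ℝ) - t)/2) * Gfun n 0 m := by
  have hn2 : (2:ℝ) ≤ (n:ℝ) := by exact_mod_cast hn
  have habs : ¬ ((n:ℝ) ≤ |t|) := by
    rw [not_le, abs_lt]; constructor <;> linarith
  have hfl : ⌊((n : ℝ) + t) / 2⌋ = (n:ℤ) - 1 := by
    rw [Int.floor_eq_iff]
    constructor
    · push_cast; linarith
    · push_cast; linarith
  rw [Hfun, if_neg habs, hfl]
  rw [show ((n:ℤ) - 1).toNat = n - 1 from by omega]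
  rw [show n - (n-1) = 1 from by omega, show (n-1) + 1 = n from by omega,
      show (1:ℕ) - 1 = 0 from rfl]
  push_cast
  ring

lemma Hfun_eval_top2 (n m : ℕ) (hn : 2 ≤ n) (t : ℝ) (ht1 : (n : ℝ) - 2 < t) (ht2 : t < (n : ℝ)) :
    Hfun n m (t - 2)
      = (((n:ℝ) - t)/2) * Gfun (n-2) 2 m + (1 - ((n:ℝ) - t)/2) * Gfun (n-1) 1 m := by
  have hn2 : (2:ℝ) ≤ (n:ℝ) := by exact_mod_cast hn
  have habs : ¬ ((n:ℝ) ≤ |t - 2|) := by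
    rw [not_le, abs_lt]; constructor <;> linarith
  have hfl : ⌊((n : ℝ) + (t - 2)) / 2⌋ = (n:ℤ) - 2 := by
    rw [Int.floor_eq_iff]
    constructor
    · push_cast; linarith
    · push_cast; linarith
  rw [Hfun, if_neg habs, hfl]
  rw [show ((n:ℤ) - 2).toNat = n - 2 from by omega]
  rw [show n - (n-2) = 2 from by omega, show (n-2) + 1 = n - 1 from by omega,
      show (2:ℕ) - 1 = 1 from rfl]
  push_cast
  ring

theorem H_boundary_recurrence (n m : ℕ) (hn : 2 ≤ n) (hm : 1 ≤ m) (t : ℝ)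
    (ht1 : (n : ℝ) - 2 < t) (ht2 : t < (n : ℝ)) :
    Hfun n m t ≥ 1 / (1 + ((n : ℝ) - t) / 2)
      + (((n : ℝ) - t) / 2) / (1 + ((n : ℝ) - t) / 2) * Hfun n (m - 1) (t - 2) := by
  have hn2 : (2:ℝ) ≤ (n:ℝ) := by exact_mod_cast hn
  rw [Hfun_eval_top n m hn t ht1 ht2, Hfun_eval_top2 n (m-1) hn t ht1 ht2]
  set s : ℝ := ((n:ℝ) - t)/2 with hs
  have hs0 : 0 < s := by rw [hs]; linarith
  have hs1 : s < 1 := by rw [hs]; linarith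
  set A : ℝ := Gfun (n-2) 2 (m-1) with hA
  set B : ℝ := Gfun (n-1) 1 (m-1) with hB
  set C : ℝ := Gfun (n-1) 1 m with hC
  have hD : Gfun n 0 m = 1 := Gfun_x_zero n m
  have hrec : C = (A + 1)/2 := by
    have h := Gfun_rec (n-2) 0 (m-1)
    rw [show (n-2) + 1 = n - 1 from by omega, show (0:ℕ) + 1 = 1 from rfl,
        show (m-1) + 1 = m from by omega, show (0:ℕ) + 2 = 2 from rfl,
        show (n-2) + 2 = n from by omega, Gfun_x_zero] at h
    rw [hC, h, hA]
  have hmono : B ≤ C := by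
    have h := Gfun_mono (m-1) (n-1) 1
    rw [show (m-1) + 1 = m from by omega] at h
    exact h
  have hB0 : 0 ≤ B := Gfun_nonneg _ _ _
  have hA0 : 0 ≤ A := Gfun_nonneg _ _ _
  rw [hD, ge_iff_le]
  have hden : (0:ℝ) < 1 + s := by linarith
  have key : 1/(1+s) + s/(1+s) * (s*A + (1-s)*B) = (1 + s*(s*A + (1-s)*B))/(1+s) := by
    ring
  rw [key, div_le_iff₀ hden]
  have hA2 : A = 2*C - 1 := by linarith
  rw [hA2]
  nlinarith [mul_nonneg (mul_nonneg hs0.le (by linarith : (0:ℝ) ≤ 1 - s))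
    (by linarith : (0:ℝ) ≤ C - B)]
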